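/- Let 0 ≤ α < 1, b > 0, and let S > 0 be a constant such that every H¹ function v on [b,b+1] with ∫_b^{b+1} v(r)·r dr = 0 satisfies max_{b ≤ r ≤ b+1} v(r)²·r^{1−α} ≤ S·∫_b^{b+1} v'(r)²·r dr. Let V be a nonnegative integrable function on (b,b+1) with ∫_b^{b+1} V(r)·r^α dr ≤ 1/S. Then for every continuously differentiable function u : [b,b+1] → ℝ satisfying ∫_b^{b+1} u(r)·√r dr = 0, one has ∫_b^{b+1} V(r)·u(r)² dr ≤ ∫_b^{b+1} ( (d/dr)( u(r)·r^{−1/2} ) )² · r dr. -/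

import Mathlib

open MeasureTheory Set

/-!
Write `u = f √r`. Then `∫ u √r = ∫ f r`, so `f` is admissible in the weighted
Poincaré–Sobolev inequality, `h_b[u] = ∫ (f')² r`, and `u² = (f² r^{1-α}) r^α ≤ S h_b[u] r^α`.
Integrating against `V ≥ 0` and using `∫ V r^α ≤ 1/S` gives `∫ V u² ≤ h_b[u]`.
-/

theorem Real.rpow_neg_half_eq_inv_sqrt {r : ℝ} (hr : 0 ≤ r) : r ^ (-(1 / 2) : ℝ) = (√r)⁻¹ := by
  rw [Real.rpow_neg hr, Real.sqrt_eq_rpow]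

theorem Real.mul_rpow_neg_half_mul_self (x : ℝ) {r : ℝ} (hr : 0 < r) :
    x * r ^ (-(1 / 2) : ℝ) * r = x * √r := by
  rw [Real.rpow_neg_half_eq_inv_sqrt hr.le]
  have hsqrt : √r ≠ 0 := (Real.sqrt_pos.2 hr).ne'
  field_simp
  rw [Real.sq_sqrt hr.le]

theorem Real.sq_mul_rpow_neg_half_mul_self (x : ℝ) {r : ℝ} (hr : 0 < r) :
    (x * r ^ (-(1 / 2) : ℝ)) ^ 2 * r = x ^ 2 := by
  rw [Real.rpow_neg_half_eq_inv_sqrt hr.le]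
  have hsqrt : √r ≠ 0 := (Real.sqrt_pos.2 hr).ne'
  field_simp
  rw [Real.sq_sqrt hr.le]

section FTC

variable {E : Type*} [NormedAddCommGroup E] [NormedSpace ℝ E] [CompleteSpace E]
  {f : ℝ → E} {a b x : ℝ}

theorem ContDiffOn.eq_add_integral_derivWithin_Icc (hf : ContDiffOn ℝ 1 f (Icc a b))
    (hx : x ∈ Icc a b) : f x = f a + ∫ t in a..x, derivWithin f (Icc a b) t := by
  have hderiv : ∫ t in a..x, derivWithin f (Icc a b) t = ∫ t in a..x, deriv f t := by
    simp only [intervalIntegral.integral_of_le hx.1, integral_Ioc_eq_integral_Ioo]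
    exact setIntegral_congr_fun measurableSet_Ioo fun t ht =>
      derivWithin_of_mem_nhds (Icc_mem_nhds ht.1 (ht.2.trans_le hx.2))
  rw [hderiv, intervalIntegral.integral_deriv_of_contDiffOn_Icc
    (hf.mono (Icc_subset_Icc_right hx.2)) hx.1, add_sub_cancel]

end FTC

theorem ContDiffOn.integrableOn_derivWithin_sq {f : ℝ → ℝ} {a b : ℝ}
    (hf : ContDiffOn ℝ 1 f (Icc a b)) (hab : a < b) :
    IntegrableOn (fun t => derivWithin f (Icc a b) t ^ 2) (Ioo a b) :=
  ((hf.continuousOn_derivWithin (uniqueDiffOn_Icc hab) le_rfl).pow 2).integrableOn_Icc.mono_set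
    Ioo_subset_Icc_self

theorem MeasureTheory.IntegrableOn.intervalIntegrable_mul_continuousOn {V g : ℝ → ℝ} {a b : ℝ} (hab : a ≤ b)
    (hV : IntegrableOn V (Ioo a b)) (hg : ContinuousOn g (Icc a b)) :
    IntervalIntegrable (fun r => V r * g r) volume a b := by
  rw [intervalIntegrable_iff_integrableOn_Icc_of_le hab]
  exact ((integrableOn_Icc_iff_integrableOn_Ioo).2 hV).mul_continuousOn hg isCompact_Icc

theorem intervalIntegral.integral_mul_le_mul_integral_mul_of_le {V F w : ℝ → ℝ} {a b M : ℝ}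
    (hab : a ≤ b) (hV : ∀ r ∈ Ioo a b, 0 ≤ V r)
    (hVF : IntervalIntegrable (fun r => V r * F r) volume a b)
    (hVw : IntervalIntegrable (fun r => V r * w r) volume a b)
    (hF : ∀ r ∈ Ioo a b, F r ≤ M * w r) :
    ∫ r in a..b, V r * F r ≤ M * ∫ r in a..b, V r * w r := by
  rw [← intervalIntegral.integral_const_mul]
  refine intervalIntegral.integral_mono_on_of_le_Ioo hab hVF (hVw.const_mul M) fun r hr => ?_
  calc V r * F r ≤ V r * (M * w r) := mul_le_mul_of_nonneg_left (hF r hr) (hV r hr)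
    _ = M * (V r * w r) := mul_left_comm _ _ _

theorem form_nonneg_orthogonal_sqrt_weighted (α : ℝ)
    (b : ℝ) (hb : 0 < b) (S : ℝ) (hSpos : 0 < S)
    (hS : ∀ v g : ℝ → ℝ, ContinuousOn v (Set.Icc b (b + 1)) →
      MeasureTheory.IntegrableOn (fun t => g t ^ 2) (Set.Ioo b (b + 1)) →
      (∀ x ∈ Set.Icc b (b + 1), v x = v b + ∫ t in b..x, g t) →
      (∫ r in b..(b + 1), v r * r) = 0 →
      ∀ r ∈ Set.Icc b (b + 1),
        v r ^ 2 * r ^ (1 - α) ≤ S * ∫ r in b..(b + 1), (g r) ^ 2 * r)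
    (V : ℝ → ℝ) (hV : ∀ r ∈ Set.Ioo b (b + 1), 0 ≤ V r)
    (hVint : MeasureTheory.IntegrableOn V (Set.Ioo b (b + 1)))
    (hVsmall : (∫ r in b..(b + 1), V r * r ^ α) ≤ 1 / S)
    (u : ℝ → ℝ) (hu : ContDiffOn ℝ 1 u (Set.Icc b (b + 1)))
    (hmean : (∫ r in b..(b + 1), u r * Real.sqrt r) = 0) :
    ∫ r in b..(b + 1), V r * u r ^ 2
      ≤ ∫ r in b..(b + 1),
          (derivWithin (fun s : ℝ => u s * s ^ (-(1 / 2) : ℝ)) (Set.Icc b (b + 1)) r) ^ 2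
            * r := by
  set f : ℝ → ℝ := fun s => u s * s ^ (-(1 / 2) : ℝ)
  set I := ∫ r in b..(b + 1), derivWithin f (Icc b (b + 1)) r ^ 2 * r
  have hble : b ≤ b + 1 := by linarith
  have hpos : ∀ r ∈ Icc b (b + 1), 0 < r := fun r hr => hb.trans_le hr.1
  have hf : ContDiffOn ℝ 1 f (Icc b (b + 1)) := hu.mul fun r hr =>
    (Real.contDiffAt_rpow_const_of_ne (hpos r hr).ne').contDiffWithinAt
  have horth : ∫ r in b..(b + 1), f r * r = 0 := by
    rw [← hmean]
    refine intervalIntegral.integral_congr fun r hr => ?_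
    exact Real.mul_rpow_neg_half_mul_self (u r) (hpos r (uIcc_of_le hble ▸ hr))
  have hsup := hS f _ hf.continuousOn (hf.integrableOn_derivWithin_sq (by linarith))
    (fun x hx => hf.eq_add_integral_derivWithin_Icc hx) horth
  have hpt : ∀ r ∈ Ioo b (b + 1), u r ^ 2 ≤ S * I * r ^ α := fun r hr => by
    have hr₀ := hpos r (Ioo_subset_Icc_self hr)
    calc u r ^ 2 = f r ^ 2 * r ^ (1 - α) * r ^ α := by
          rw [mul_assoc, ← Real.rpow_add hr₀, sub_add_cancel, Real.rpow_one,
            Real.sq_mul_rpow_neg_half_mul_self _ hr₀]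
      _ ≤ S * I * r ^ α := mul_le_mul_of_nonneg_right (hsup r (Ioo_subset_Icc_self hr))
          (Real.rpow_nonneg hr₀.le α)
  have hI : 0 ≤ I := intervalIntegral.integral_nonneg hble fun r hr =>
    mul_nonneg (sq_nonneg _) (hpos r hr).le
  calc ∫ r in b..(b + 1), V r * u r ^ 2
      ≤ S * I * ∫ r in b..(b + 1), V r * r ^ α :=
        intervalIntegral.integral_mul_le_mul_integral_mul_of_le hble hV
          (hVint.intervalIntegrable_mul_continuousOn hble (hu.continuousOn.pow 2))
          (hVint.intervalIntegrable_mul_continuousOn hble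
            (continuousOn_id.rpow_const fun r hr => Or.inl (hpos r hr).ne')) hpt
    _ ≤ S * I * (1 / S) := mul_le_mul_of_nonneg_left hVsmall (by positivity)
    _ = I := by field_simp
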